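/- Let X be a set, k ≥ 1 a natural number, ℱ a finite family of predicates on k-tuples from X, and 1 ≤ i < k. Suppose L₁, …, L_i are finite subsets of X such that for every f ∈ ℱ: Alt∃(L₁,…,L_i, X,…,X; f) ↔ Alt∃(X,…,X; f) and Alt∀(L₁,…,L_i, X,…,X; f) ↔ Alt∀(X,…,X; f). Then there exists a finite subset L_{i+1} ⊆ X with |L_{i+1}| ≤ 2·|ℱ|·|L₁|·…·|L_i| such that for every f ∈ ℱ: Alt∃(L₁,…,L_{i+1}, X,…,X; f) ↔ Alt∃(X,…,X; f) and Alt∀(L₁,…,L_{i+1}, X,…,X; f) ↔ Alt∀(X,…,X; f). (This is the induction step of the quantifier-range restriction lemma: one additional quantifier range can be restricted to a finite set obtained by adding, for each f ∈ ℱ and each tuple in L₁×…×L_i, one witness or counterexample for the (i+1)-st quantifier.) -/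

import Mathlib

/-!
Splitting the quantifier prefix after the first `i` quantifiers (`alt_append`) reduces the claim
to one prefix `u ∈ L₁ × ⋯ × Lᵢ` at a time. There the `(i+1)`-st quantifier ranges over all of `X`,
and it keeps its truth value when restricted to any set containing a witness (if it is `∃`) or a
counterexample (if it is `∀`). One such point for every `f ∈ ℱ`, every prefix and each of the two
starting quantifiers gives `L_{i+1}` with at most `2 · |ℱ| · ∏ |Lₘ|` elements.
-/

namespace Stmt1

/-- Alternating quantified statement: `Alt b k S f` where `b = true` starts with `∃`
and `b = false` starts with `∀`; the `j`-th quantified variable ranges over `S j`. -/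
def Alt {X : Type*} : Bool → (k : ℕ) → (Fin k → Set X) → ((Fin k → X) → Prop) → Prop
  | _, 0, _, f => f finZeroElim
  | b, (k + 1), S, f =>
    if b then ∃ u ∈ S 0, Alt (!b) k (fun i => S i.succ) (fun v => f (Fin.cons u v))
    else ∀ u ∈ S 0, Alt (!b) k (fun i => S i.succ) (fun v => f (Fin.cons u v))

/-- Ranges where the first `i` quantifiers range over the finite sets `L 0, …, L (i-1)`
and the remaining quantifiers range over all of `X`. -/
def prefRanges {X : Type*} (k i : ℕ) (L : Fin i → Finset X) : Fin k → Set X :=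
  fun j => if h : (j : ℕ) < i then (↑(L ⟨j, h⟩) : Set X) else Set.univ

section

variable {X : Type*}

theorem alt_zero (b : Bool) (S : Fin 0 → Set X) (f : (Fin 0 → X) → Prop) :
    Alt b 0 S f ↔ f finZeroElim := Iff.rfl

theorem alt_true_succ {k : ℕ} (S : Fin (k + 1) → Set X) (f : (Fin (k + 1) → X) → Prop) :
    Alt true (k + 1) S f ↔ ∃ u ∈ S 0, Alt false k (Fin.tail S) (fun v => f (Fin.cons u v)) :=
  Iff.rfl

theorem alt_false_succ {k : ℕ} (S : Fin (k + 1) → Set X) (f : (Fin (k + 1) → X) → Prop) :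
    Alt false (k + 1) S f ↔ ∀ u ∈ S 0, Alt true k (Fin.tail S) (fun v => f (Fin.cons u v)) :=
  Iff.rfl

theorem alt_congr {b : Bool} {k : ℕ} {S : Fin k → Set X} {f g : (Fin k → X) → Prop}
    (h : ∀ u, (∀ j, u j ∈ S j) → (f u ↔ g u)) : Alt b k S f ↔ Alt b k S g := by
  induction k generalizing b with
  | zero => exact h _ finZeroElim
  | succ k ih =>
    have step : ∀ x ∈ S 0, Alt (!b) k (Fin.tail S) (fun v => f (Fin.cons x v)) ↔
        Alt (!b) k (Fin.tail S) (fun v => g (Fin.cons x v)) := fun x hx =>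
      ih fun u hu => h _ (Fin.cases hx hu)
    cases b
    · exact forall₂_congr step
    · exact exists_congr fun x => and_congr_right (step x)

theorem alt_succ_eq_snoc {b : Bool} {k : ℕ} (S : Fin (k + 1) → Set X)
    (f : (Fin (k + 1) → X) → Prop) :
    Alt b (k + 1) S f ↔ Alt b k (Fin.init S)
      (fun u => Alt (not^[k] b) 1 (fun _ => S (Fin.last k)) (fun v => f (Fin.snoc u (v 0)))) := by
  induction k generalizing b with
  | zero =>
    have cons_eq_snoc (x : X) : Fin.cons x finZeroElim = (Fin.snoc finZeroElim x : Fin 1 → X) :=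
      funext fun j => by rw [Fin.fin_one_eq_zero j]; rfl
    cases b <;> simp only [alt_true_succ, alt_false_succ, alt_zero, cons_eq_snoc] <;> rfl
  | succ k ih =>
    have step : ∀ x, Alt (!b) (k + 1) (Fin.tail S) (fun v => f (Fin.cons x v)) ↔
        Alt (!b) k (Fin.tail (Fin.init S)) (fun u => Alt (not^[k + 1] b) 1
          (fun _ => S (Fin.last (k + 1))) (fun v => f (Fin.snoc (Fin.cons x u) (v 0)))) := by
      intro x
      rw [ih, Fin.tail_init_eq_init_tail]
      simp only [Fin.cons_snoc_eq_snoc_cons]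
      rfl
    cases b
    · exact forall₂_congr fun x _ => step x
    · exact exists_congr fun x => and_congr_right fun _ => step x

theorem alt_append {b : Bool} (m n : ℕ) (S : Fin (m + n) → Set X) (f : (Fin (m + n) → X) → Prop) :
    Alt b (m + n) S f ↔ Alt b m (fun j => S (Fin.castAdd n j))
      (fun u => Alt (not^[m] b) n (fun j => S (Fin.natAdd m j)) (fun v => f (Fin.append u v))) := by
  induction n with
  | zero =>
    exact alt_congr fun u _ => (congrArg f (Fin.append_right_nil u finZeroElim rfl)).symm.to_iff
  | succ n ih =>
    refine (alt_succ_eq_snoc (k := m + n) S f).trans ?_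
    rw [ih]
    refine alt_congr fun u _ => ?_
    have iterate_not : not^[m + n] b = not^[n] (not^[m] b) := by
      rw [add_comm, Function.iterate_add_apply]
    rw [alt_succ_eq_snoc, iterate_not]
    simp only [Fin.append_snoc]
    rfl

/-- `x` decides the leading quantifier: it is a witness if `b = true` and a counterexample
if `b = false`. -/
theorem alt_restrict_first_iff {b : Bool} {k : ℕ} {S : Fin (k + 1) → Set X}
    {f : (Fin (k + 1) → X) → Prop} {s : Set X} (hs : s ⊆ S 0)
    (hwit : (∃ x ∈ S 0, (Alt (!b) k (Fin.tail S) (fun v => f (Fin.cons x v)) ↔ b)) →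
      ∃ x ∈ s, (Alt (!b) k (Fin.tail S) (fun v => f (Fin.cons x v)) ↔ b)) :
    Alt b (k + 1) (Fin.cons s (Fin.tail S)) f ↔ Alt b (k + 1) S f := by
  cases b
  · simp only [alt_false_succ, Fin.cons_zero, Fin.tail_cons]
    refine ⟨fun h x hx => ?_, fun h x hx => h x (hs hx)⟩
    by_contra hnot
    obtain ⟨y, hy, hny⟩ := hwit ⟨x, hx, by simpa using hnot⟩
    exact (by simpa using hny : ¬ _) (h y hy)
  · simp only [alt_true_succ, Fin.cons_zero, Fin.tail_cons]
    refine ⟨fun ⟨x, hx, h⟩ => ⟨x, hs hx, h⟩, fun ⟨x, hx, h⟩ => ?_⟩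
    obtain ⟨y, hy, hpy⟩ := hwit ⟨x, hx, by simpa using h⟩
    exact ⟨y, hy, by simpa using hpy⟩

theorem exists_witness_finset {κ : Type*} (s : Finset κ) (P : κ → X → Prop) :
    ∃ W : Finset X, W.card ≤ s.card ∧ ∀ c ∈ s, (∃ x, P c x) → ∃ x ∈ W, P c x := by
  classical
  induction s using Finset.induction_on with
  | empty => exact ⟨∅, by simp, by simp⟩
  | insert a s ha ih =>
    obtain ⟨W, hW, hWP⟩ := ih
    rw [Finset.card_insert_of_notMem ha]
    by_cases hPa : ∃ x, P a x
    · obtain ⟨x, hx⟩ := hPa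
      refine ⟨insert x W, (Finset.card_insert_le x W).trans (by omega), fun c hc hPc => ?_⟩
      rcases Finset.mem_insert.mp hc with rfl | hc
      · exact ⟨x, Finset.mem_insert_self x W, hx⟩
      · obtain ⟨y, hy, hPy⟩ := hWP c hc hPc
        exact ⟨y, Finset.mem_insert_of_mem hy, hPy⟩
    · refine ⟨W, by omega, fun c hc hPc => ?_⟩
      rcases Finset.mem_insert.mp hc with rfl | hc
      · exact absurd hPc hPa
      · exact hWP c hc hPc

theorem prefRanges_add {m : ℕ} (L : Fin m → Finset X) (n : ℕ) :
    prefRanges (m + n) m L = Fin.append (fun j => ↑(L j)) (fun _ => Set.univ) := by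
  funext j
  refine Fin.addCases (fun j => ?_) (fun j => ?_) j <;> simp [prefRanges]

theorem prefRanges_snoc {m : ℕ} (L : Fin m → Finset X) (s : Finset X) (n : ℕ) :
    prefRanges (m + (n + 1)) (m + 1) (Fin.snoc L s) =
      Fin.append (fun j => ↑(L j)) (Fin.cons ↑s (fun _ => Set.univ)) := by
  funext j
  refine Fin.addCases (fun j => ?_) (fun j => ?_) j
  · simp [prefRanges, Fin.snoc]
  · cases j using Fin.cases <;> simp [prefRanges, Fin.snoc]

end

theorem quantifier_range_restriction_step_general
    {X : Type*} {ι : Type*} (k i : ℕ) (hik : i < k)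
    (F : Finset ι) (f : ι → (Fin k → X) → Prop)
    (L : Fin i → Finset X)
    (hL : ∀ j ∈ F,
      (Alt true k (prefRanges k i L) (f j) ↔ Alt true k (fun _ => Set.univ) (f j)) ∧
      (Alt false k (prefRanges k i L) (f j) ↔ Alt false k (fun _ => Set.univ) (f j))) :
    ∃ L' : Finset X, L'.card ≤ 2 * F.card * ∏ m, (L m).card ∧
      ∀ j ∈ F,
        (Alt true k (prefRanges k (i + 1) (Fin.snoc L L')) (f j) ↔
          Alt true k (fun _ => Set.univ) (f j)) ∧
        (Alt false k (prefRanges k (i + 1) (Fin.snoc L L')) (f j) ↔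
          Alt false k (fun _ => Set.univ) (f j)) := by
  obtain ⟨n, rfl⟩ : ∃ n, k = i + (n + 1) := ⟨k - i - 1, by omega⟩
  obtain ⟨L', hcard, hwit⟩ := exists_witness_finset
    ((Finset.univ ×ˢ F) ×ˢ Fintype.piFinset L) fun ⟨⟨c, j⟩, u⟩ x =>
      (Alt (!c) n (fun _ => Set.univ) (fun v => f j (Fin.append u (Fin.cons x v))) ↔ c)
  refine ⟨L', hcard.trans_eq (by simp), fun j hj => ?_⟩
  have restrict (b : Bool) :
      Alt b (i + (n + 1)) (prefRanges _ (i + 1) (Fin.snoc L L')) (f j) ↔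
        Alt b (i + (n + 1)) (prefRanges _ i L) (f j) := by
    rw [prefRanges_snoc, prefRanges_add, alt_append, alt_append]
    simp only [Fin.append_left, Fin.append_right]
    refine alt_congr fun u hu =>
      alt_restrict_first_iff (S := fun _ => Set.univ) (Set.subset_univ _) fun ⟨x, _, hx⟩ => ?_
    exact hwit ⟨⟨_, j⟩, u⟩ (by simpa [hj] using hu) ⟨x, hx⟩
  exact ⟨(restrict true).trans (hL j hj).1, (restrict false).trans (hL j hj).2⟩

/-- Induction step of the quantifier-range restriction lemma. -/
theorem quantifier_range_restriction_step
    {X : Type*} {ι : Type*} (k i : ℕ) (hi : 1 ≤ i) (hik : i < k)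
    (F : Finset ι) (f : ι → (Fin k → X) → Prop)
    (L : Fin i → Finset X)
    (hL : ∀ j ∈ F,
      (Alt true k (prefRanges k i L) (f j) ↔ Alt true k (fun _ => Set.univ) (f j)) ∧
      (Alt false k (prefRanges k i L) (f j) ↔ Alt false k (fun _ => Set.univ) (f j))) :
    ∃ L' : Finset X, L'.card ≤ 2 * F.card * ∏ m, (L m).card ∧
      ∀ j ∈ F,
        (Alt true k (prefRanges k (i + 1) (Fin.snoc L L')) (f j) ↔
          Alt true k (fun _ => Set.univ) (f j)) ∧
        (Alt false k (prefRanges k (i + 1) (Fin.snoc L L')) (f j) ↔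
          Alt false k (fun _ => Set.univ) (f j)) :=
  quantifier_range_restriction_step_general k i hik F f L hL

end Stmt1
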